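/- arXiv:math/0310430 — 2 statements merged into one kernel-verified Lean document; each statement's English description precedes it below -/
import Mathlib

section
/- Let n ≥ 3 and let (x_1,…,x_n, x_0, x̄_n,…,x̄_1) be nonnegative integers with x_0 ∈ {0,1} and x_0 + Σ (x_i + x̄_i) = l. First form the primed tuple x'_1 = (x_1 − x̄_1)_+, x'_i = (x_i − x̄_i)_+ + min(x_{i−1}, x̄_{i−1}) (2 ≤ i ≤ n), x'_0 = x_0 + 2·min(x_n, x̄_n), x̄'_i = (x̄_i − x_i)_+ + min(x_{i−1}, x̄_{i−1}) (2 ≤ i ≤ n), x̄'_1 = (x̄_1 − x_1)_+. Then applying the inverse formulas to (x'_1,…,x'_n, x'_0, x̄'_n,…,x̄'_1) — namely y_1 = x'_1 + min(x'_2, x̄'_2); y_i = (x'_i − x̄'_i)_+ + min(x'_{i+1}, x̄'_{i+1}) for 2 ≤ i ≤ n−1; y_n = (x'_n − x̄'_n)_+ + ⌊x'_0/2⌋; y_0 = x'_0 − 2⌊x'_0/2⌋; ȳ_n = (x̄'_n − x'_n)_+ + ⌊x'_0/2⌋; ȳ_i = (x̄'_i − x'_i)_+ + min(x'_{i+1},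 x̄'_{i+1}) for 2 ≤ i ≤ n−1; ȳ_1 = x̄'_1 + min(x'_2, x̄'_2) — recovers the original tuple: y_i = x_i, ȳ_i = x̄_i for all 1 ≤ i ≤ n, and y_0 = x_0. (That is, φ ∘ ψ = id for type B_n^{(1)}.) -/
/-! The primed tuple keeps the differences `x i - xb i` (truncated, on both sides) and moves
`min (x i) (xb i)` one slot up, to position `i + 1` (into `x0'` as `2 * min` for `i = n`).
Since `min (a - b) (b - a) = 0`, the minimum at position `i + 1` of the primed tuple is exactly the
moved `min (x i) (xb i)`, and `φ` puts it back: `(x i - xb i) + min (x i) (xb i) = x i`. -/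

def xprime (x xb : ℕ → ℕ) (i : ℕ) : ℕ :=
  if i = 1 then x 1 - xb 1 else (x i - xb i) + min (x (i - 1)) (xb (i - 1))

def xbprime (x xb : ℕ → ℕ) (i : ℕ) : ℕ :=
  if i = 1 then xb 1 - x 1 else (xb i - x i) + min (x (i - 1)) (xb (i - 1))

def x0prime (n : ℕ) (x xb : ℕ → ℕ) (x0 : ℕ) : ℕ := x0 + 2 * min (x n) (xb n)

def phiMapX (n : ℕ) (y yb : ℕ → ℕ) (y0 : ℕ) (i : ℕ) : ℕ :=
  if i = 1 then y 1 + min (y 2) (yb 2)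
  else if i = n then (y n - yb n) + y0 / 2
  else (y i - yb i) + min (y (i + 1)) (yb (i + 1))

def phiMapXb (n : ℕ) (y yb : ℕ → ℕ) (y0 : ℕ) (i : ℕ) : ℕ :=
  if i = 1 then yb 1 + min (y 2) (yb 2)
  else if i = n then (yb n - y n) + y0 / 2
  else (yb i - y i) + min (y (i + 1)) (yb (i + 1))

def phiMapX0 (y0 : ℕ) : ℕ := y0 - 2 * (y0 / 2)

section SwapSymmetry

theorem xbprime_eq_xprime_swap (x xb : ℕ → ℕ) : xbprime x xb = xprime xb x := by
  ext i
  simp only [xbprime, xprime, min_comm]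

theorem x0prime_swap (n : ℕ) (x xb : ℕ → ℕ) (x0 : ℕ) :
    x0prime n xb x x0 = x0prime n x xb x0 := by
  simp only [x0prime, min_comm]

theorem phiMapXb_eq_phiMapX_swap (n : ℕ) (y yb : ℕ → ℕ) (y0 : ℕ) :
    phiMapXb n y yb y0 = phiMapX n yb y y0 := by
  ext i
  simp only [phiMapXb, phiMapX, min_comm]

end SwapSymmetry

theorem tsub_tsub_tsub_swap (a b : ℕ) : (a - b) - (b - a) = a - b := by
  omega

theorem min_tsub_tsub_swap (a b : ℕ) : min (a - b) (b - a) = 0 := by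
  omega

section Primed

variable (x xb : ℕ → ℕ)

theorem xprime_sub_xbprime (i : ℕ) : xprime x xb i - xbprime x xb i = x i - xb i := by
  unfold xprime xbprime
  split_ifs with hi
  · subst hi
    exact tsub_tsub_tsub_swap _ _
  · rw [Nat.add_sub_add_right, tsub_tsub_tsub_swap]

theorem min_xprime_xbprime {i : ℕ} (hi : i ≠ 1) :
    min (xprime x xb i) (xbprime x xb i) = min (x (i - 1)) (xb (i - 1)) := by
  simp only [xprime, xbprime, if_neg hi, min_add_add_right, min_tsub_tsub_swap, zero_add]

theorem x0prime_div_two (n : ℕ) {x0 : ℕ} (hx0 : x0 ≤ 1) :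
    x0prime n x xb x0 / 2 = min (x n) (xb n) := by
  unfold x0prime
  omega

theorem phiMapX0_x0prime (n : ℕ) {x0 : ℕ} (hx0 : x0 ≤ 1) :
    phiMapX0 (x0prime n x xb x0) = x0 := by
  unfold phiMapX0
  rw [x0prime_div_two x xb n hx0, x0prime, Nat.add_sub_cancel]

theorem phiMapX_xprime (n : ℕ) {x0 : ℕ} (hx0 : x0 ≤ 1) {i : ℕ} (hi : i ≠ 0) :
    phiMapX n (xprime x xb) (xbprime x xb) (x0prime n x xb x0) i = x i := by
  unfold phiMapX
  split_ifs with hi1 hin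
  · subst hi1
    rw [min_xprime_xbprime x xb (by decide), xprime, if_pos rfl]
    exact Nat.sub_add_min_cancel _ _
  · subst hin
    rw [xprime_sub_xbprime, x0prime_div_two x xb i hx0, Nat.sub_add_min_cancel]
  · rw [xprime_sub_xbprime, min_xprime_xbprime x xb (by omega), Nat.add_sub_cancel,
      Nat.sub_add_min_cancel]

theorem phiMapXb_xprime (n : ℕ) {x0 : ℕ} (hx0 : x0 ≤ 1) {i : ℕ} (hi : i ≠ 0) :
    phiMapXb n (xprime x xb) (xbprime x xb) (x0prime n x xb x0) i = xb i := by
  rw [phiMapXb_eq_phiMapX_swap, xbprime_eq_xprime_swap, ← xbprime_eq_xprime_swap xb x,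
    ← x0prime_swap,
    phiMapX_xprime xb x n hx0 hi]

end Primed

theorem stmt_13_general (n : ℕ)
    (x xb : ℕ → ℕ) (x0 : ℕ) (hx0 : x0 ≤ 1) :
    (∀ i, 1 ≤ i → i ≤ n →
      phiMapX n (xprime x xb) (xbprime x xb) (x0prime n x xb x0) i = x i ∧
      phiMapXb n (xprime x xb) (xbprime x xb) (x0prime n x xb x0) i = xb i) ∧
    phiMapX0 (x0prime n x xb x0) = x0 :=
  ⟨fun _ hi _ =>
    ⟨phiMapX_xprime x xb n hx0 (by omega), phiMapXb_xprime x xb n hx0 (by omega)⟩,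
    phiMapX0_x0prime x xb n hx0⟩

theorem stmt_13 (n l : ℕ) (hn : 3 ≤ n)
    (x xb : ℕ → ℕ) (x0 : ℕ) (hx0 : x0 ≤ 1)
    (hsum : x0 + ∑ i ∈ Finset.Icc 1 n, (x i + xb i) = l) :
    (∀ i, 1 ≤ i → i ≤ n →
      phiMapX n (xprime x xb) (xbprime x xb) (x0prime n x xb x0) i = x i ∧
      phiMapXb n (xprime x xb) (xbprime x xb) (x0prime n x xb x0) i = xb i) ∧
    phiMapX0 (x0prime n x xb x0) = x0 :=
  stmt_13_general n x xb x0 hx0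
end

section
/- Let n ≥ 3, l ≥ 1, and let a_0, a_1, …, a_n be nonnegative integers satisfying a_0 + a_1 + 2·Σ_{i=2}^{n−1} a_i + a_n = l. Then there exists a unique element b = (x_1,…,x_n, x_0, x̄_n,…,x̄_1) of the level-l B_n^{(1)} perfect crystal B_l such that ε_i(b) = a_i for all 0 ≤ i ≤ n. -/
/-- `ε_i(b)` (`0 ≤ i ≤ n`) for a `B_n^{(1)}` crystal element `(x, x₀, x̄)`. -/
def Eps (n : ℕ) (x xb : ℕ → ℕ) (x0 : ℕ) (i : ℕ) : ℕ :=
  if i = 0 then x 1 + (x 2 - xb 2)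
  else if i = n then 2 * xb n + x0
  else xb i + (x (i + 1) - xb (i + 1))

/-- Split off `1` from the sum over `Icc 1 n`. -/
lemma sum_split_left (n : ℕ) (hn : 1 ≤ n) (f : ℕ → ℕ) :
    ∑ i ∈ Finset.Icc 1 n, f i = f 1 + ∑ i ∈ Finset.Icc 2 n, f i := by
  rw [← Finset.insert_Icc_add_one_left_eq_Icc hn, Finset.sum_insert (by simp)]; rfl

/-- Split off `n` from the sum over `Icc 2 n`. -/
lemma sum_split_right (n : ℕ) (hn : 3 ≤ n) (f : ℕ → ℕ) :
    ∑ i ∈ Finset.Icc 2 n, f i = (∑ i ∈ Finset.Icc 2 (n - 1), f i) + f n := by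
  have h : n = (n - 1) + 1 := by omega
  rw [h, Finset.sum_Icc_succ_top (by omega)]
  simp

/-- Shift the index of a sum by one. -/
lemma sum_shift (n : ℕ) (hn : 3 ≤ n) (f : ℕ → ℕ) :
    ∑ i ∈ Finset.Icc 2 (n - 1), f (i + 1) = ∑ i ∈ Finset.Icc 3 n, f i := by
  have h : Finset.Icc 3 n = (Finset.Icc 2 (n - 1)).map (addRightEmbedding 1) := by
    rw [Finset.map_add_right_Icc]
    congr 1 <;> omega
  rw [h, Finset.sum_map]
  rfl

theorem stmt_17 (n l : ℕ) (hn : 3 ≤ n) (hl : 1 ≤ l) (a : ℕ → ℕ)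
    (ha : a 0 + a 1 + 2 * ∑ i ∈ Finset.Icc 2 (n - 1), a i + a n = l) :
    ∃ (x : ℕ → ℕ) (x0 : ℕ) (xb : ℕ → ℕ),
      (x0 ≤ 1 ∧ x0 + ∑ i ∈ Finset.Icc 1 n, (x i + xb i) = l ∧
        ∀ i ≤ n, Eps n x xb x0 i = a i) ∧
      ∀ (x' : ℕ → ℕ) (x0' : ℕ) (xb' : ℕ → ℕ),
        (x0' ≤ 1 ∧ x0' + ∑ i ∈ Finset.Icc 1 n, (x' i + xb' i) = l ∧
          ∀ i ≤ n, Eps n x' xb' x0' i = a i) →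
        (∀ i ∈ Finset.Icc 1 n, x' i = x i ∧ xb' i = xb i) ∧ x0' = x0 := by
  set x : ℕ → ℕ := fun i => if i = 1 then a 0 else if i = n then a n / 2 else a i with hx
  set xb : ℕ → ℕ := fun i => if i = n then a n / 2 else a i with hxb
  set x0 : ℕ := a n % 2 with hx0
  have hx1 : x 1 = a 0 := by simp [hx]
  have hxn : x n = a n / 2 := by simp [hx]; omega
  have hxbn : xb n = a n / 2 := by simp [hxb]
  have hxmid : ∀ i, 2 ≤ i → i ≤ n - 1 → x i = a i := by
    intro i h1 h2; simp only [hx]; rw [if_neg (by omega), if_neg (by omega)]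
  have hxbmid : ∀ i, 1 ≤ i → i ≤ n - 1 → xb i = a i := by
    intro i h1 h2; simp only [hxb]; rw [if_neg (by omega)]
  refine ⟨x, x0, xb, ⟨Nat.le_of_lt_succ (Nat.mod_lt _ (by norm_num)), ?_, ?_⟩, ?_⟩
  · -- sum condition
    rw [sum_split_left n (by omega), sum_split_right n hn]
    have hsum : ∑ i ∈ Finset.Icc 2 (n - 1), (x i + xb i)
        = 2 * ∑ i ∈ Finset.Icc 2 (n - 1), a i := by
      rw [Finset.mul_sum]
      apply Finset.sum_congr rfl
      intro i hi
      simp only [Finset.mem_Icc] at hi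
      rw [hxmid i hi.1 hi.2, hxbmid i (by omega) hi.2]
      ring
    rw [hsum, hx1, hxn, hxbn]
    have : xb 1 = a 1 := hxbmid 1 le_rfl (by omega)
    rw [this]
    omega
  · -- epsilon conditions
    intro i hi
    rcases Nat.eq_or_lt_of_le hi with heq | hi'
    · rw [heq]
      unfold Eps
      rw [if_neg (by omega : ¬ n = 0), if_pos rfl, hxbn, hx0]
      omega
    rcases Nat.eq_zero_or_pos i with rfl | hipos
    · unfold Eps
      rw [if_pos rfl, hx1, hxmid 2 le_rfl (by omega), hxbmid 2 (by omega) (by omega)]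
      omega
    · unfold Eps
      rw [if_neg (by omega : ¬ i = 0), if_neg (by omega : ¬ i = n)]
      have hxb_i : xb i = a i := hxbmid i hipos (by omega)
      have hxx : x (i + 1) = xb (i + 1) := by
        rcases Nat.eq_or_lt_of_le (by omega : i + 1 ≤ n) with h | h
        · rw [h, hxn, hxbn]
        · rw [hxmid (i+1) (by omega) (by omega), hxbmid (i+1) (by omega) (by omega)]
      rw [hxb_i, hxx]
      omega
  · -- uniqueness
    rintro x' x0' xb' ⟨h0le, hsum, heps⟩
    have e0 : x' 1 + (x' 2 - xb' 2) = a 0 := by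
      have := heps 0 (by omega)
      simpa [Eps] using this
    have en : 2 * xb' n + x0' = a n := by
      have h := heps n le_rfl
      rw [Eps, if_neg (by omega : ¬ n = 0), if_pos rfl] at h
      exact h
    have emid : ∀ i, 1 ≤ i → i ≤ n - 1 → xb' i + (x' (i + 1) - xb' (i + 1)) = a i := by
      intro i h1 h2
      have h := heps i (by omega)
      rw [Eps, if_neg (by omega : ¬ i = 0), if_neg (by omega : ¬ i = n)] at h
      exact h
    -- rewrite the target sum identity
    have key : ∑ i ∈ Finset.Icc 2 n, x' i
        = ∑ i ∈ Finset.Icc 2 n, (xb' i + 2 * (x' i - xb' i)) := by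
      have hsum' : x0' + (x' 1 + xb' 1 + ∑ i ∈ Finset.Icc 2 n, (x' i + xb' i)) = l := by
        rw [← sum_split_left n (by omega) (fun i => x' i + xb' i)]; exact hsum
      have hA : ∑ i ∈ Finset.Icc 2 (n - 1), a i
          = ∑ i ∈ Finset.Icc 2 (n - 1), xb' i
            + ∑ i ∈ Finset.Icc 3 n, (x' i - xb' i) := by
        rw [← sum_shift n hn (fun i => x' i - xb' i), ← Finset.sum_add_distrib]
        apply Finset.sum_congr rfl
        intro i hi
        simp only [Finset.mem_Icc] at hi
        exact (emid i (by omega) hi.2).symm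
      have hsplit2 : ∑ i ∈ Finset.Icc 2 n, (x' i + xb' i)
          = ∑ i ∈ Finset.Icc 2 n, x' i + ∑ i ∈ Finset.Icc 2 n, xb' i :=
        Finset.sum_add_distrib
      have hd : ∑ i ∈ Finset.Icc 2 n, (x' i - xb' i)
          = (x' 2 - xb' 2) + ∑ i ∈ Finset.Icc 3 n, (x' i - xb' i) := by
        rw [← Finset.insert_Icc_add_one_left_eq_Icc (by omega : 2 ≤ n), Finset.sum_insert (by simp)]; rfl
      have hxbsplit : ∑ i ∈ Finset.Icc 2 n, xb' i
          = ∑ i ∈ Finset.Icc 2 (n - 1), xb' i + xb' n := sum_split_right n hn _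
      have hrhs : ∑ i ∈ Finset.Icc 2 n, (xb' i + 2 * (x' i - xb' i))
          = ∑ i ∈ Finset.Icc 2 n, xb' i + 2 * ∑ i ∈ Finset.Icc 2 n, (x' i - xb' i) := by
        rw [Finset.sum_add_distrib, Finset.mul_sum]
      rw [hrhs]
      have h1 : xb' 1 + (x' 2 - xb' 2) = a 1 := by
        have := emid 1 le_rfl (by omega)
        norm_num at this
        exact this
      -- combine everything with omega
      omega
    have hpt : ∀ i ∈ Finset.Icc 2 n, x' i = xb' i := by
      have hle : ∀ i ∈ Finset.Icc 2 n, x' i ≤ xb' i + 2 * (x' i - xb' i) := by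
        intro i _; omega
      have := (Finset.sum_eq_sum_iff_of_le hle).1 key
      intro i hi
      have := this i hi
      omega
    have h2eq : x' 2 = xb' 2 := hpt 2 (by simp; omega)
    have hx'1 : x' 1 = a 0 := by omega
    have hxb'1 : xb' 1 = a 1 := by
      have h1 : xb' 1 + (x' 2 - xb' 2) = a 1 := emid 1 le_rfl (by omega)
      omega
    constructor
    · intro i hi
      simp only [Finset.mem_Icc] at hi
      rcases Nat.eq_or_lt_of_le hi.2 with heq | hlt
      · subst heq
        have hxn' : x' i = xb' i := hpt i (by simp [Finset.mem_Icc]; omega)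
        rw [hxn, hxbn]
        constructor <;> omega
      rcases Nat.eq_or_lt_of_le hi.1 with h1 | h1
      · subst h1
        have h12 : xb' 1 + (x' 2 - xb' 2) = a 1 := emid 1 le_rfl (by omega)
        rw [hx1, hxbmid 1 le_rfl (by omega)]
        constructor <;> omega
      · have hxi : x' i = xb' i := hpt i (by simp [Finset.mem_Icc]; omega)
        have hsucc : x' (i + 1) = xb' (i + 1) := hpt (i + 1) (by simp [Finset.mem_Icc]; omega)
        have h := emid i (by omega) (by omega)
        rw [hxmid i (by omega) (by omega), hxbmid i (by omega) (by omega)]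
        constructor <;> omega
    · omega
end
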